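/- For each edge e = (x, y^{-1}) of the Whitehead graph with x ≠ y, exactly two Nielsen automorphisms reduce the length of the subword xy: ψ^x_e: x ↦ x y^{-1} and ψ^y_e: y ↦ x^{-1} y (each fixing all other generators); i.e., among all Nielsen automorphisms t ∈ N(X), |t(xy)| < 2 if and only if t ∈ {ψ^x_e, ψ^y_e}. -/
import Mathlib


/-- A Nielsen automorphism (excluding length-invariant ones): fixes all generators
except one generator `x`, which is sent to one of `y x`, `y⁻¹ x`, `x y`, `x y⁻¹`
for some generator `y ≠ x`. -/
def IsNielsen {n : ℕ} (φ : MulAut (FreeGroup (Fin n))) : Prop :=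
  ∃ x y : Fin n, x ≠ y ∧ (∀ z : Fin n, z ≠ x → φ (FreeGroup.of z) = FreeGroup.of z) ∧
    (φ (FreeGroup.of x) = FreeGroup.of y * FreeGroup.of x ∨
     φ (FreeGroup.of x) = (FreeGroup.of y)⁻¹ * FreeGroup.of x ∨
     φ (FreeGroup.of x) = FreeGroup.of x * FreeGroup.of y ∨
     φ (FreeGroup.of x) = FreeGroup.of x * (FreeGroup.of y)⁻¹)

private lemma mk_eq_mk' {α : Type*} [DecidableEq α] {L₁ L₂ : List (α × Bool)} :
    FreeGroup.mk L₁ = FreeGroup.mk L₂ ↔ FreeGroup.reduce L₁ = FreeGroup.reduce L₂ :=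
  ⟨FreeGroup.reduce.sound, FreeGroup.reduce.exact⟩

private lemma norm_mk' {α : Type*} [DecidableEq α] (L : List (α × Bool)) :
    FreeGroup.norm (FreeGroup.mk L) = (FreeGroup.reduce L).length := by
  rw [FreeGroup.norm, FreeGroup.toWord_mk]

private lemma of_eq_mk' {α : Type*} (z : α) :
    FreeGroup.of z = FreeGroup.mk [(z, true)] := rfl

/-- Exactly two Nielsen automorphisms reduce the length of the reduced word `xy`
(for distinct generators `x, y`): `ψ^x : x ↦ x y⁻¹` and `ψ^y : y ↦ x⁻¹ y`, each
fixing all other generators. -/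
theorem nielsen_reducing_xy_iff {n : ℕ} (x y : Fin n) (hxy : x ≠ y)
    (t : MulAut (FreeGroup (Fin n))) (ht : IsNielsen t) :
    FreeGroup.norm (t (FreeGroup.of x * FreeGroup.of y)) < 2 ↔
      ((t (FreeGroup.of x) = FreeGroup.of x * (FreeGroup.of y)⁻¹ ∧
          ∀ z : Fin n, z ≠ x → t (FreeGroup.of z) = FreeGroup.of z) ∨
       (t (FreeGroup.of y) = (FreeGroup.of x)⁻¹ * FreeGroup.of y ∧
          ∀ z : Fin n, z ≠ y → t (FreeGroup.of z) = FreeGroup.of z)) := by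
  obtain ⟨a, b, hab, hfix, hc⟩ := ht
  rw [map_mul]
  by_cases hax : a = x
  · subst hax
    have hty : t (FreeGroup.of y) = FreeGroup.of y := hfix y (Ne.symm hxy)
    rw [hty]
    rcases hc with h | h | h | h <;> rw [h]
    · simp only [of_eq_mk', FreeGroup.inv_mk, FreeGroup.invRev, FreeGroup.mul_mk,
        norm_mk', mk_eq_mk', hty]
      simp [FreeGroup.reduce, hab, hxy, Ne.symm hab]
    · simp only [of_eq_mk', FreeGroup.inv_mk, FreeGroup.invRev, FreeGroup.mul_mk,
        norm_mk', mk_eq_mk', hty]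
      simp [FreeGroup.reduce, hab, hxy, Ne.symm hab]
    · simp only [of_eq_mk', FreeGroup.inv_mk, FreeGroup.invRev, FreeGroup.mul_mk,
        norm_mk', mk_eq_mk', hty]
      simp [FreeGroup.reduce, hab, hxy, Ne.symm hab]
    · by_cases hby : b = y
      · subst hby
        constructor
        · exact fun _ => Or.inl ⟨rfl, hfix⟩
        · intro _
          simp only [of_eq_mk', FreeGroup.inv_mk, FreeGroup.invRev, FreeGroup.mul_mk, norm_mk']
          simp [FreeGroup.reduce, hab, Ne.symm hab]
      · simp only [of_eq_mk', FreeGroup.inv_mk, FreeGroup.invRev, FreeGroup.mul_mk,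
          norm_mk', mk_eq_mk', hty]
        simp [FreeGroup.reduce, hab, hxy, hby, Ne.symm hab, Ne.symm hby]
  · have htx : t (FreeGroup.of x) = FreeGroup.of x := hfix x (Ne.symm (fun h => hax h.symm) |>.symm)
    rw [htx]
    by_cases hay : a = y
    · subst hay
      rcases hc with h | h | h | h <;> rw [h]
      · simp only [of_eq_mk', FreeGroup.inv_mk, FreeGroup.invRev, FreeGroup.mul_mk,
          norm_mk', mk_eq_mk', htx]
        simp [FreeGroup.reduce, hab, hxy, Ne.symm hab]
      · by_cases hbx : b = x
        · subst hbx
          constructor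
          · exact fun _ => Or.inr ⟨rfl, hfix⟩
          · intro _
            simp only [of_eq_mk', FreeGroup.inv_mk, FreeGroup.invRev, FreeGroup.mul_mk, norm_mk']
            simp [FreeGroup.reduce, hab, Ne.symm hab]
        · simp only [of_eq_mk', FreeGroup.inv_mk, FreeGroup.invRev, FreeGroup.mul_mk,
            norm_mk', mk_eq_mk', htx]
          simp [FreeGroup.reduce, hab, hxy, hbx, Ne.symm hab, Ne.symm hbx]
      · simp only [of_eq_mk', FreeGroup.inv_mk, FreeGroup.invRev, FreeGroup.mul_mk,
          norm_mk', mk_eq_mk', htx]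
        simp [FreeGroup.reduce, hab, hxy, Ne.symm hab]
      · simp only [of_eq_mk', FreeGroup.inv_mk, FreeGroup.invRev, FreeGroup.mul_mk,
          norm_mk', mk_eq_mk', htx]
        simp [FreeGroup.reduce, hab, hxy, Ne.symm hab]
    · have hty : t (FreeGroup.of y) = FreeGroup.of y := hfix y (fun h => hay h.symm)
      rw [hty]
      simp only [of_eq_mk', FreeGroup.inv_mk, FreeGroup.invRev, FreeGroup.mul_mk,
        norm_mk', mk_eq_mk']
      simp [FreeGroup.reduce, hxy]
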